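/- Let {s_i} be the modified Jacobi sequence of period N = pq, ω = e^{2πi/N}. If a ∈ D_0*, then S(ω^a) = -Ω_0, and if a ∈ D_1*, then S(ω^a) = -Ω_1, where Ω_j = Σ_{x∈D_j*} ω^x. -/

import Mathlib

/-!
Write `χ c = (c / p) (c / q)` for the Jacobi symbol modulo `pq`. The primitive root `g` has
symbol `(-1)(-1) = 1` and `x` has symbol `(-1) · 1 = -1`; by the Chinese remainder theorem every
unit is some `g ^ t * x ^ m`, and `x ^ d` is a power of `g`. Hence Whiteman's classes are the
fibres of the symbol: `D_j* = {c | χ c = (-1) ^ j}`.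

For `a ∈ D_j*`, multiplication by `a` therefore maps `D_1*` onto `D_{1+j}*` and permutes the
nonzero multiples `P` of `p`, so `S(ω^a) = Ω_{1+j} + ∑_{c ∈ P} ω^{ac} = Ω_{1+j} - 1`. Finally
`Ω_0 + Ω_1` is the sum of the primitive `pq`-th roots of unity, which inclusion–exclusion over the
multiples of `p` and of `q` evaluates to `1`.
-/

open Finset

section PowMul

theorem mem_image_range_pow_mul_iff {M : Type*} [Monoid M] [DecidableEq M] {g y c : M} {L : ℕ}
    (hL : 0 < L) (hgL : g ^ L = 1) :
    c ∈ (range L).image (fun t => g ^ t * y) ↔ ∃ t, g ^ t * y = c := by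
  simp only [mem_image, mem_range]
  exact ⟨fun ⟨t, _, ht⟩ => ⟨t, ht⟩,
    fun ⟨t, ht⟩ => ⟨t % L, Nat.mod_lt t hL, by rwa [← pow_eq_pow_mod t hgL]⟩⟩

theorem pow_eq_pow_of_modEq_orderOf {M : Type*} [Monoid M] {a : M} {m n : ℕ}
    (h : m ≡ n [MOD orderOf a]) : a ^ m = a ^ n := by
  rw [← pow_mod_orderOf, h, pow_mod_orderOf]

variable {M : Type*} [CommMonoid M] {g x : M} {L d e : ℕ}

theorem pow_mul_pow_eq_pow_mul_pow_mod (hxd : x ^ d = g ^ e) (t m : ℕ) :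
    g ^ t * x ^ m = g ^ (t + e * (m / d)) * x ^ (m % d) := by
  conv_lhs => rw [← Nat.mod_add_div m d]
  rw [pow_add, pow_mul, hxd, ← pow_mul, pow_add]
  ac_rfl

theorem mem_biUnion_image_pow_mul_pow_iff [DecidableEq M] (hL : 0 < L) (hgL : g ^ L = 1)
    (hd : 0 < d) (hd2 : 2 ∣ d) (hxd : x ^ d = g ^ e) {j : ℕ} (hj : j < 2) {c : M} :
    c ∈ (range (d / 2)).biUnion (fun i => (range L).image (fun t => g ^ t * x ^ (2 * i + j))) ↔
      ∃ t m, m % 2 = j ∧ g ^ t * x ^ m = c := by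
  simp only [mem_biUnion, mem_range, mem_image_range_pow_mul_iff hL hgL]
  constructor
  · rintro ⟨i, -, t, rfl⟩
    exact ⟨t, 2 * i + j, by omega, rfl⟩
  · rintro ⟨t, m, hm, rfl⟩
    have hmd : m % d % 2 = m % 2 := Nat.mod_mod_of_dvd m hd2
    have hlt : m % d < d := Nat.mod_lt m hd
    refine ⟨m % d / 2, by omega, t + e * (m / d), ?_⟩
    rw [show 2 * (m % d / 2) + j = m % d by omega, pow_mul_pow_eq_pow_mul_pow_mod hxd t m]

end PowMul

theorem MonoidHom.sum_fiber_mul_left {M G β : Type*} [CommMonoid M] [Fintype M] [CommMonoid G]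
    [DecidableEq G] [AddCommMonoid β] (χ : M →* G) (f : M → β) {a : M} (ha : IsUnit a) (v : G) :
    ∑ c ∈ univ.filter (fun c => χ c = v), f (a * c) =
      ∑ c ∈ univ.filter (fun c => χ c = χ a * v), f c := by
  obtain ⟨u, rfl⟩ := ha
  refine sum_nbij' (u * ·) (↑u⁻¹ * ·) (fun c hc => ?_) (fun c hc => ?_) (fun c _ => ?_)
    (fun c _ => ?_) (fun _ _ => rfl)
  · simp_all
  · simp only [mem_filter, mem_univ, true_and, map_mul] at hc ⊢
    rw [hc, ← mul_assoc, ← map_mul, Units.inv_mul, map_one, one_mul]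
  · simp
  · simp

section ZModArith

theorem ZMod.natCast_eq_natCast_iff_and {p q : ℕ} (hpq : p.Coprime q) {a b : ℕ} :
    (a : ZMod (p * q)) = b ↔ (a : ZMod p) = b ∧ (a : ZMod q) = b := by
  simp only [ZMod.natCast_eq_natCast_iff, Nat.modEq_and_modEq_iff_modEq_mul hpq]

theorem ZMod.isUnit_natCast_mul_iff {p q : ℕ} (hp : p.Prime) (hq : q.Prime) {n : ℕ} :
    IsUnit (n : ZMod (p * q)) ↔ ¬p ∣ n ∧ ¬q ∣ n := by
  rw [ZMod.isUnit_iff_coprime, Nat.coprime_mul_iff_right, Nat.coprime_comm,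
    hp.coprime_iff_not_dvd, Nat.coprime_comm, hq.coprime_iff_not_dvd]

theorem ZMod.exists_pow_eq_of_orderOf_eq {p : ℕ} [Fact p.Prime] {a c : ZMod p}
    (ha : orderOf a = p - 1) (hc : c ≠ 0) : ∃ t, a ^ t = c := by
  have : NeZero (p - 1) := ⟨by have := (Fact.out : p.Prime).two_le; omega⟩
  obtain ⟨t, -, ht⟩ := (IsPrimitiveRoot.iff_orderOf.2 ha).eq_pow_of_pow_eq_one
    (ZMod.pow_card_sub_one_eq_one hc)
  exact ⟨t, ht⟩

theorem Finset.sum_range_natCast_zmod {M : Type*} [AddCommMonoid M] {N : ℕ} [NeZero N]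
    (f : ZMod N → M) : ∑ i ∈ range N, f i = ∑ c, f c :=
  sum_nbij' Nat.cast ZMod.val (fun _ _ => mem_univ _) (fun c _ => mem_range.2 c.val_lt)
    (fun _ hi => ZMod.val_cast_of_lt (mem_range.1 hi)) (fun c _ => ZMod.natCast_zmod_val c)
    (fun _ _ => rfl)

theorem Finset.sum_range_mul_ite_dvd {M : Type*} [AddCommMonoid M] {n m : ℕ} (hn : 0 < n)
    (f : ℕ → M) : ∑ i ∈ range (n * m), (if n ∣ i then f i else 0) = ∑ k ∈ range m, f (n * k) := by
  rw [← sum_filter]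
  refine sum_nbij' (· / n) (n * ·) (fun i hi => ?_) (fun k hk => ?_) (fun i hi => ?_)
    (fun k _ => Nat.mul_div_cancel_left k hn) (fun i hi => ?_)
  · simp only [mem_filter, mem_range] at hi ⊢
    exact Nat.div_lt_of_lt_mul hi.1
  · simp only [mem_filter, mem_range] at hk ⊢
    exact ⟨Nat.mul_lt_mul_of_pos_left hk hn, dvd_mul_right n k⟩
  · exact Nat.mul_div_cancel' (mem_filter.1 hi).2
  · rw [Nat.mul_div_cancel' (mem_filter.1 hi).2]

theorem pow_val_mul_natCast {M : Type*} [Monoid M] {ω : M} {N : ℕ} (hω : ω ^ N = 1)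
    (a : ZMod N) (n : ℕ) : ω ^ (a * n).val = ω ^ (a.val * n) := by
  rw [ZMod.val_mul, ZMod.val_natCast, Nat.mul_mod_mod, ← pow_eq_pow_mod _ hω]

theorem sum_range_ite_mem_mul_pow {R : Type*} [CommSemiring R] {ω : R} {N : ℕ} [NeZero N]
    (hω : ω ^ N = 1) (A : Finset (ZMod N)) (a : ZMod N) :
    ∑ i ∈ range N, ((if (i : ZMod N) ∈ A then 1 else 0 : ℕ) : R) * (ω ^ a.val) ^ i =
      ∑ c ∈ A, ω ^ (a * c).val := by
  have hA : ∑ c ∈ A, ω ^ (a * c).val = ∑ c, if c ∈ A then ω ^ (a * c).val else 0 := by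
    rw [sum_ite_mem, univ_inter]
  rw [hA, ← sum_range_natCast_zmod]
  refine sum_congr rfl fun i _ => ?_
  split_ifs <;> simp [← pow_mul, pow_val_mul_natCast hω]

end ZModArith

namespace IsPrimitiveRoot

variable {R : Type*} [CommRing R] [IsDomain R] {ω : R}

theorem sum_filter_isUnit_pow_val {p q : ℕ} [Fact p.Prime] [Fact q.Prime] (hpq : p ≠ q)
    (hω : IsPrimitiveRoot ω (p * q)) :
    ∑ c ∈ univ.filter (fun c : ZMod (p * q) => IsUnit c), ω ^ c.val = 1 := by
  have hp : p.Prime := Fact.out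
  have hq : q.Prime := Fact.out
  have hpq' : p.Coprime q := (Nat.coprime_primes hp hq).2 hpq
  have hind : ∀ i ∈ range (p * q),
      (if IsUnit (i : ZMod (p * q)) then ω ^ (i : ZMod (p * q)).val else 0) =
        ω ^ i - (if p ∣ i then ω ^ i else 0) - (if q ∣ i then ω ^ i else 0) +
          (if p * q ∣ i then ω ^ i else 0) := by
    intro i hi
    have hdvd : p * q ∣ i ↔ p ∣ i ∧ q ∣ i :=
      ⟨fun h => ⟨dvd_of_mul_right_dvd h, dvd_of_mul_left_dvd h⟩,
        fun h => hpq'.mul_dvd_of_dvd_of_dvd h.1 h.2⟩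
    simp only [ZMod.val_natCast_of_lt (mem_range.1 hi), ZMod.isUnit_natCast_mul_iff hp hq, hdvd]
    by_cases hpi : p ∣ i <;> by_cases hqi : q ∣ i <;> simp [hpi, hqi]
  have hsumq := sum_range_mul_ite_dvd (m := p) hq.pos (fun i => ω ^ i)
  have hsumpq := sum_range_mul_ite_dvd (m := 1) (Nat.mul_pos hp.pos hq.pos) (fun i => ω ^ i)
  rw [mul_comm q p] at hsumq
  rw [mul_one] at hsumpq
  rw [sum_filter, ← sum_range_natCast_zmod, sum_congr rfl hind, sum_add_distrib, sum_sub_distrib,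
    sum_sub_distrib, sum_range_mul_ite_dvd hp.pos, hsumq, hsumpq]
  simp only [pow_mul, sum_range_one, pow_zero,
    hω.geom_sum_eq_zero (Nat.one_lt_mul_iff.2 ⟨hp.pos, hq.pos, Or.inl hp.one_lt⟩),
    (hω.pow (Nat.mul_pos hp.pos hq.pos) rfl).geom_sum_eq_zero hq.one_lt,
    (hω.pow (Nat.mul_pos hp.pos hq.pos) (mul_comm p q)).geom_sum_eq_zero hp.one_lt]
  ring

theorem sum_image_Icc_natCast_mul {n m : ℕ} (hω : IsPrimitiveRoot ω (n * m)) (hn : 0 < n)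
    (hm : 1 < m) {a : ZMod (n * m)} (ha : a.val.Coprime m) :
    ∑ c ∈ (Icc 1 (m - 1)).image (fun k => ((k * n : ℕ) : ZMod (n * m))), ω ^ (a * c).val =
      -1 := by
  have hlt : ∀ k ∈ Icc 1 (m - 1), k * n < n * m := fun k hk => by
    rw [mul_comm n]
    exact Nat.mul_lt_mul_of_pos_right (by simp at hk; omega) hn
  rw [sum_image fun k hk l hl h => Nat.eq_of_mul_eq_mul_right hn <| by
    simpa only [ZMod.val_natCast_of_lt (hlt k hk), ZMod.val_natCast_of_lt (hlt l hl)]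
      using congrArg ZMod.val h]
  have hζ : IsPrimitiveRoot (ω ^ (n * a.val)) m := by
    rw [pow_mul]
    exact (hω.pow (by positivity) rfl).pow_of_coprime _ ha
  have hgeom := hζ.geom_sum_eq_zero hm
  rw [range_eq_Ico, sum_eq_sum_Ico_succ_bot (by omega),
    show Ico (0 + 1) m = Icc 1 (m - 1) by ext; simp; omega] at hgeom
  rw [eq_neg_iff_add_eq_zero, ← hgeom, add_comm, pow_zero]
  congr 1
  refine sum_congr rfl fun k _ => ?_
  rw [pow_val_mul_natCast hω.pow_eq_one, ← pow_mul]
  congr 1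
  ring

end IsPrimitiveRoot

theorem quadraticChar_eq_neg_one_of_orderOf_eq {p : ℕ} [Fact p.Prime] {a : ZMod p} (hp : p ≠ 2)
    (ha : orderOf a = p - 1) : quadraticChar (ZMod p) a = -1 := by
  have hp3 : 3 ≤ p := by have := (Fact.out : p.Prime).two_le; omega
  have ha0 : a ≠ 0 := by
    rintro rfl
    have h := pow_orderOf_eq_one (0 : ZMod p)
    rw [ha, zero_pow (by omega)] at h
    exact zero_ne_one h
  rw [quadraticChar_eq_pow_of_char_ne_two (by rwa [ZMod.ringChar_zmod_n]) ha0, ZMod.card,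
    if_neg (pow_ne_one_of_lt_orderOf (by omega) (by omega))]

/-- The Jacobi symbol `(c / pq) = (c / p) (c / q)`. -/
def jacobiChar (p q : ℕ) [Fact p.Prime] [Fact q.Prime] : ZMod (p * q) →* ℤ :=
  (quadraticChar (ZMod p)).toMonoidHom.comp (ZMod.castHom (dvd_mul_right p q) (ZMod p)) *
    (quadraticChar (ZMod q)).toMonoidHom.comp (ZMod.castHom (dvd_mul_left q p) (ZMod q))

section JacobiChar

variable {p q g x : ℕ} [Fact p.Prime] [Fact q.Prime]

theorem jacobiChar_natCast (n : ℕ) :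
    jacobiChar p q n = quadraticChar (ZMod p) n * quadraticChar (ZMod q) n := by
  simp only [jacobiChar, MonoidHom.mul_apply, MonoidHom.comp_apply, MulChar.coe_toMonoidHom,
    MonoidHom.coe_coe, map_natCast]

theorem jacobiChar_natCast_eq_zero_iff {n : ℕ} : jacobiChar p q n = 0 ↔ p ∣ n ∨ q ∣ n := by
  rw [jacobiChar_natCast, mul_eq_zero, quadraticChar_eq_zero_iff, quadraticChar_eq_zero_iff,
    ZMod.natCast_eq_zero_iff, ZMod.natCast_eq_zero_iff]

theorem jacobiChar_eq_one_or_eq_neg_one_iff {c : ZMod (p * q)} :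
    jacobiChar p q c = 1 ∨ jacobiChar p q c = -1 ↔ IsUnit c := by
  obtain ⟨n, rfl⟩ := ZMod.natCast_zmod_surjective c
  rw [ZMod.isUnit_natCast_mul_iff Fact.out Fact.out, ← not_or, ← jacobiChar_natCast_eq_zero_iff]
  refine ⟨by rintro (h | h) <;> simp [h], fun h => ?_⟩
  rw [jacobiChar_natCast] at h ⊢
  rcases quadraticChar_dichotomy (quadraticChar_eq_zero_iff.not.1 (left_ne_zero_of_mul h)) with
    h₁ | h₁ <;>
  rcases quadraticChar_dichotomy (quadraticChar_eq_zero_iff.not.1 (right_ne_zero_of_mul h)) with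
    h₂ | h₂ <;>
  simp [h₁, h₂]

theorem jacobiChar_pow_mul_pow (hp : p ≠ 2) (hq : q ≠ 2) (hgp : orderOf (g : ZMod p) = p - 1)
    (hgq : orderOf (g : ZMod q) = q - 1) (hxp : (x : ZMod p) = g) (hxq : (x : ZMod q) = 1)
    (t m : ℕ) :
    jacobiChar p q ((g : ZMod (p * q)) ^ t * (x : ZMod (p * q)) ^ m) = (-1) ^ m := by
  rw [map_mul, map_pow, map_pow, jacobiChar_natCast, jacobiChar_natCast, hxp, hxq,
    quadraticChar_eq_neg_one_of_orderOf_eq hp hgp, quadraticChar_eq_neg_one_of_orderOf_eq hq hgq,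
    map_one]
  norm_num

theorem ZMod.exists_pow_mul_pow_eq_natCast (hpq : p ≠ q) (hgp : orderOf (g : ZMod p) = p - 1)
    (hgq : orderOf (g : ZMod q) = q - 1) (hxp : (x : ZMod p) = g) (hxq : (x : ZMod q) = 1)
    {n : ℕ} (hnp : ¬p ∣ n) (hnq : ¬q ∣ n) :
    ∃ t m, (g : ZMod (p * q)) ^ t * (x : ZMod (p * q)) ^ m = n := by
  obtain ⟨t, ht⟩ := ZMod.exists_pow_eq_of_orderOf_eq hgq ((ZMod.natCast_eq_zero_iff n q).not.2 hnq)
  obtain ⟨b, hb⟩ := ZMod.exists_pow_eq_of_orderOf_eq hgp ((ZMod.natCast_eq_zero_iff n p).not.2 hnp)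
  -- `g ^ t` has the right residue mod `q`; the power of `x` then corrects it mod `p`.
  refine ⟨t, b + (p - 2) * t, ?_⟩
  have hexp : t + (b + (p - 2) * t) = b + (p - 1) * t := by
    have : p - 1 = p - 2 + 1 := by have := (Fact.out : p.Prime).two_le; omega
    rw [this]
    ring
  have hg : (g : ZMod p) ^ (p - 1) = 1 := hgp ▸ pow_orderOf_eq_one _
  exact_mod_cast (ZMod.natCast_eq_natCast_iff_and
    ((Nat.coprime_primes Fact.out Fact.out).2 hpq)).2
    ⟨by push_cast; rw [hxp, ← pow_add, hexp, pow_add, pow_mul, hg, one_pow, mul_one, hb],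
     by push_cast; rw [hxq, one_pow, mul_one, ht]⟩

theorem jacobiChar_eq_neg_one_pow_iff (hp : p ≠ 2) (hq : q ≠ 2) (hpq : p ≠ q)
    (hgp : orderOf (g : ZMod p) = p - 1) (hgq : orderOf (g : ZMod q) = q - 1)
    (hxp : (x : ZMod p) = g) (hxq : (x : ZMod q) = 1) {j : ℕ} (hj : j < 2) {c : ZMod (p * q)} :
    jacobiChar p q c = (-1) ^ j ↔
      ∃ t m, m % 2 = j ∧ (g : ZMod (p * q)) ^ t * (x : ZMod (p * q)) ^ m = c := by
  refine ⟨fun h => ?_, ?_⟩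
  · obtain ⟨n, rfl⟩ := ZMod.natCast_zmod_surjective c
    have hn : ¬(p ∣ n ∨ q ∣ n) := by
      rw [← jacobiChar_natCast_eq_zero_iff, h]
      exact pow_ne_zero _ (by norm_num)
    obtain ⟨t, m, hc⟩ := ZMod.exists_pow_mul_pow_eq_natCast hpq hgp hgq hxp hxq
      (not_or.1 hn).1 (not_or.1 hn).2
    refine ⟨t, m, ?_, hc⟩
    rw [← hc, jacobiChar_pow_mul_pow hp hq hgp hgq hxp hxq, neg_one_pow_eq_pow_mod_two] at h
    interval_cases j <;> rcases Nat.mod_two_eq_zero_or_one m with hm | hm <;> simp_all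
  · rintro ⟨t, m, rfl, rfl⟩
    rw [jacobiChar_pow_mul_pow hp hq hgp hgq hxp hxq, neg_one_pow_eq_pow_mod_two]

end JacobiChar

section Whiteman

variable {p q g x : ℕ}

theorem ZMod.natCast_pow_lcm_eq_one (hpq : p.Coprime q) (hgp : orderOf (g : ZMod p) = p - 1)
    (hgq : orderOf (g : ZMod q) = q - 1) :
    (g : ZMod (p * q)) ^ Nat.lcm (p - 1) (q - 1) = 1 := by
  have h : ((g ^ Nat.lcm (p - 1) (q - 1) : ℕ) : ZMod (p * q)) = ((1 : ℕ) : ZMod (p * q)) :=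
    (ZMod.natCast_eq_natCast_iff_and hpq).2
      ⟨by push_cast; exact orderOf_dvd_iff_pow_eq_one.1 (by rw [hgp]; exact Nat.dvd_lcm_left _ _),
        by push_cast; exact orderOf_dvd_iff_pow_eq_one.1 (by rw [hgq]; exact Nat.dvd_lcm_right _ _)⟩
  exact_mod_cast h

theorem ZMod.exists_natCast_pow_gcd_eq (hpq : p.Coprime q) (hgp : orderOf (g : ZMod p) = p - 1)
    (hgq : orderOf (g : ZMod q) = q - 1) (hxp : (x : ZMod p) = g) (hxq : (x : ZMod q) = 1) :
    ∃ e, (x : ZMod (p * q)) ^ Nat.gcd (p - 1) (q - 1) = (g : ZMod (p * q)) ^ e := by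
  obtain ⟨e, hep, heq⟩ := Nat.chineseRemainder' (n := p - 1) (m := q - 1)
    (a := Nat.gcd (p - 1) (q - 1)) (b := 0) (Nat.modEq_zero_iff_dvd.2 dvd_rfl)
  have h : ((x ^ Nat.gcd (p - 1) (q - 1) : ℕ) : ZMod (p * q)) = ((g ^ e : ℕ) : ZMod (p * q)) := by
    refine (ZMod.natCast_eq_natCast_iff_and hpq).2 ⟨?_, ?_⟩ <;> push_cast
    · rw [hxp]
      exact pow_eq_pow_of_modEq_orderOf (by rw [hgp]; exact hep.symm)
    · rw [hxq, one_pow, eq_comm, pow_eq_one_iff_modEq, hgq]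
      exact heq
  exact ⟨e, by exact_mod_cast h⟩

theorem mem_biUnion_image_iff_jacobiChar [Fact p.Prime] [Fact q.Prime] (hp : Odd p)
    (hq : Odd q) (hpq : p ≠ q) (hgp : orderOf (g : ZMod p) = p - 1)
    (hgq : orderOf (g : ZMod q) = q - 1) (hxp : (x : ZMod p) = g) (hxq : (x : ZMod q) = 1)
    {j : ℕ} (hj : j < 2) {c : ZMod (p * q)} :
    c ∈ (range (Nat.gcd (p - 1) (q - 1) / 2)).biUnion (fun i =>
      (range (Nat.lcm (p - 1) (q - 1))).image
        (fun t => (g : ZMod (p * q)) ^ t * (x : ZMod (p * q)) ^ (2 * i + j))) ↔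
      jacobiChar p q c = (-1) ^ j := by
  have hp2 : p ≠ 2 := by rintro rfl; exact absurd hp (by decide)
  have hq2 : q ≠ 2 := by rintro rfl; exact absurd hq (by decide)
  have hp3 : 3 ≤ p := by have := (Fact.out : p.Prime).two_le; omega
  have hq3 : 3 ≤ q := by have := (Fact.out : q.Prime).two_le; omega
  have hcop : p.Coprime q := (Nat.coprime_primes Fact.out Fact.out).2 hpq
  have hd2 : 2 ∣ Nat.gcd (p - 1) (q - 1) :=
    Nat.dvd_gcd (even_iff_two_dvd.1 (Nat.Odd.sub_odd hp odd_one))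
      (even_iff_two_dvd.1 (Nat.Odd.sub_odd hq odd_one))
  obtain ⟨e, hxd⟩ := ZMod.exists_natCast_pow_gcd_eq hcop hgp hgq hxp hxq
  rw [mem_biUnion_image_pow_mul_pow_iff (Nat.lcm_pos (by omega) (by omega))
    (ZMod.natCast_pow_lcm_eq_one hcop hgp hgq) (Nat.gcd_pos_of_pos_left _ (by omega)) hd2 hxd hj,
    jacobiChar_eq_neg_one_pow_iff hp2 hq2 hpq hgp hgq hxp hxq hj]

end Whiteman

namespace IsPrimitiveRoot

variable {R : Type*} [CommRing R] [IsDomain R] {ω : R} {p q : ℕ} [Fact p.Prime] [Fact q.Prime]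

theorem sum_jacobiChar_eq_one_add_sum_jacobiChar_eq_neg_one (hpq : p ≠ q)
    (hω : IsPrimitiveRoot ω (p * q)) :
    ∑ c ∈ univ.filter (fun c => jacobiChar p q c = 1), ω ^ c.val +
      ∑ c ∈ univ.filter (fun c => jacobiChar p q c = -1), ω ^ c.val = 1 := by
  rw [← sum_union (disjoint_filter.2 fun c _ h₁ h₂ => by rw [h₁] at h₂; norm_num at h₂),
    ← filter_or]
  simp only [jacobiChar_eq_one_or_eq_neg_one_iff]
  exact hω.sum_filter_isUnit_pow_val hpq

theorem sum_union_image_Icc_natCast_mul (hω : IsPrimitiveRoot ω (p * q)) {a : ZMod (p * q)}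
    (ha : IsUnit a) :
    ∑ c ∈ univ.filter (fun c => jacobiChar p q c = -1) ∪
        (Icc 1 (q - 1)).image (fun k => ((k * p : ℕ) : ZMod (p * q))), ω ^ (a * c).val =
      ∑ c ∈ univ.filter (fun c => jacobiChar p q c = jacobiChar p q a * -1), ω ^ c.val - 1 := by
  have hdisj : Disjoint (univ.filter (fun c => jacobiChar p q c = -1))
      ((Icc 1 (q - 1)).image (fun k => ((k * p : ℕ) : ZMod (p * q)))) := by
    refine disjoint_left.2 fun c h₁ h₂ => ?_
    obtain ⟨k, -, rfl⟩ := mem_image.1 h₂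
    rw [mem_filter, jacobiChar_natCast_eq_zero_iff.2 (Or.inl (dvd_mul_left p k))] at h₁
    norm_num at h₁
  rw [sum_union hdisj, (jacobiChar p q).sum_fiber_mul_left (fun c => ω ^ c.val) ha,
    hω.sum_image_Icc_natCast_mul (a := a) (Fact.out : p.Prime).pos (Fact.out : q.Prime).one_lt
      (ZMod.val_coe_unit_coprime ha.unit).coprime_mul_left_right, sub_eq_add_neg]

end IsPrimitiveRoot

theorem stmt_16_general
    (p q : ℕ) (hp : p.Prime) (hq : q.Prime) (hop : Odd p) (hoq : Odd q)
    (hne : p ≠ q) (d : ℕ) (hd : d = Nat.gcd (p - 1) (q - 1))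
    (g : ℕ) (hgp : orderOf (g : ZMod p) = p - 1) (hgq : orderOf (g : ZMod q) = q - 1)
    (x : ℕ) (hxp : (x : ZMod p) = (g : ZMod p)) (hxq : (x : ZMod q) = 1)
    (L : ℕ) (hL : L = (p - 1) * (q - 1) / d)
    (D : ℕ → Finset (ZMod (p * q)))
    (hD : D = fun i => (Finset.range L).image
      (fun t => (g : ZMod (p * q)) ^ t * (x : ZMod (p * q)) ^ i))
    (Dstar : ℕ → Finset (ZMod (p * q)))
    (hDstar : Dstar = fun j => (Finset.range (d / 2)).biUnion (fun i => D (2 * i + j)))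
    (P : Finset (ZMod (p * q)))
    (hP : P = (Finset.Icc 1 (q - 1)).image (fun k => ((k * p : ℕ) : ZMod (p * q))))
    (s : ℕ → ℕ)
    (hs : s = fun i : ℕ => if ((i : ℕ) : ZMod (p * q)) ∈ Dstar 1 ∪ P then 1 else 0)
    (ω : ℂ) (hω : IsPrimitiveRoot ω (p * q))
    (S : ℂ → ℂ) (hS : S = fun z => ∑ i ∈ Finset.range (p * q), (s i : ℂ) * z ^ i)
    (Ω : ℕ → ℂ) (hΩ : Ω = fun j => ∑ a ∈ Dstar j, ω ^ (a.val)) :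
    (∀ a ∈ Dstar 0, S (ω ^ a.val) = -Ω 0) ∧
      (∀ a ∈ Dstar 1, S (ω ^ a.val) = -Ω 1) := by
  have := Fact.mk hp
  have := Fact.mk hq
  have hDstar_eq : ∀ j < 2, Dstar j = univ.filter (fun c => jacobiChar p q c = (-1) ^ j) := by
    intro j hj
    ext c
    subst hd hL hD hDstar
    rw [mem_filter, ← mem_biUnion_image_iff_jacobiChar hop hoq hne hgp hgq hxp hxq hj]
    simp only [mem_univ, true_and]
    rfl
  have hS_eq : ∀ a, IsUnit a → S (ω ^ a.val) =
      ∑ c ∈ univ.filter (fun c => jacobiChar p q c = jacobiChar p q a * -1), ω ^ c.val - 1 := by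
    intro a ha
    simp only [hS, hs, hP, hDstar_eq 1 one_lt_two, pow_one]
    rw [sum_range_ite_mem_mul_pow hω.pow_eq_one, hω.sum_union_image_Icc_natCast_mul ha]
  have hunits := hω.sum_jacobiChar_eq_one_add_sum_jacobiChar_eq_neg_one hne
  simp only [hΩ, hDstar_eq 0 two_pos, hDstar_eq 1 one_lt_two, mem_filter, mem_univ, true_and,
    pow_zero, pow_one]
  refine ⟨fun a ha => ?_, fun a ha => ?_⟩
  · rw [hS_eq a (jacobiChar_eq_one_or_eq_neg_one_iff.1 (Or.inl ha)), ha, one_mul]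
    linear_combination hunits
  · rw [hS_eq a (jacobiChar_eq_one_or_eq_neg_one_iff.1 (Or.inr ha)), ha, neg_one_mul, neg_neg]
    linear_combination hunits

theorem stmt_16
    (p q : ℕ) (hp : p.Prime) (hq : q.Prime) (hop : Odd p) (hoq : Odd q)
    (hne : p ≠ q) (d : ℕ) (hd : d = Nat.gcd (p - 1) (q - 1))
    (g : ℕ) (hgp : orderOf (g : ZMod p) = p - 1) (hgq : orderOf (g : ZMod q) = q - 1)
    (x : ℕ) (hxp : (x : ZMod p) = (g : ZMod p)) (hxq : (x : ZMod q) = 1)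
    (L : ℕ) (hL : L = (p - 1) * (q - 1) / d)
    (D : ℕ → Finset (ZMod (p * q)))
    (hD : D = fun i => (Finset.range L).image
      (fun t => (g : ZMod (p * q)) ^ t * (x : ZMod (p * q)) ^ i))
    (Dstar : ℕ → Finset (ZMod (p * q)))
    (hDstar : Dstar = fun j => (Finset.range (d / 2)).biUnion (fun i => D (2 * i + j)))
    (P : Finset (ZMod (p * q)))
    (hP : P = (Finset.Icc 1 (q - 1)).image (fun k => ((k * p : ℕ) : ZMod (p * q))))
    (s : ℕ → ℕ)
    (hs : s = fun i : ℕ => if ((i : ℕ) : ZMod (p * q)) ∈ Dstar 1 ∪ P then 1 else 0)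
    (hlt : p < q)
    (ω : ℂ) (hω : IsPrimitiveRoot ω (p * q))
    (S : ℂ → ℂ) (hS : S = fun z => ∑ i ∈ Finset.range (p * q), (s i : ℂ) * z ^ i)
    (Ω : ℕ → ℂ) (hΩ : Ω = fun j => ∑ a ∈ Dstar j, ω ^ (a.val)) :
    (∀ a ∈ Dstar 0, S (ω ^ a.val) = -Ω 0) ∧
      (∀ a ∈ Dstar 1, S (ω ^ a.val) = -Ω 1) :=
  stmt_16_general p q hp hq hop hoq hne d hd g hgp hgq x hxp hxq L hL D hD Dstar hDstar P hP s hs ω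
    hω S hS Ω hΩ
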